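/- Let (X,d) be a compact metric space and K, K' nonempty closed subsets of X. Then the infimum distance I_d(K,K') = inf{d(x,y) : x ∈ K, y ∈ K'} equals the infimum distance, with respect to the Monge–Kantorovich metric, between the set of Borel probability measures supported in K and the set of Borel probability measures supported in K'. -/
import Mathlib

open Topology Filter Set MeasureTheory

/-- The support of a probability measure. -/
def msupport {X : Type*} [TopologicalSpace X] [MeasurableSpace X]
    (μ : ProbabilityMeasure X) : Set X :=
  {x | ∀ U : Set X, IsOpen U → x ∈ U → 0 < (μ : Measure X) U}

/-- `F_K`: the Borel probability measures supported in `K`. -/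
def FF {X : Type*} [TopologicalSpace X] [MeasurableSpace X] (K : Set X) :
    Set (ProbabilityMeasure X) :=
  {μ | msupport μ ⊆ K}

/-- The Monge–Kantorovich distance. -/
noncomputable def mkDist {X : Type*} [MetricSpace X] [MeasurableSpace X]
    (μ ν : ProbabilityMeasure X) : ℝ :=
  ⨆ f : {f : X → ℝ // LipschitzWith 1 f},
    |∫ x, f.1 x ∂(μ : Measure X) - ∫ x, f.1 x ∂(ν : Measure X)|

/-- The infimum distance between two subsets w.r.t. a distance function `ρ`. -/
noncomputable def iDist {Y : Type*} (ρ : Y → Y → ℝ) (A B : Set Y) : ℝ :=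
  sInf {r : ℝ | ∃ a ∈ A, ∃ b ∈ B, r = ρ a b}

section Aux

variable {X : Type*} [MetricSpace X] [CompactSpace X] [MeasurableSpace X] [BorelSpace X]

lemma measure_compl_msupport (μ : ProbabilityMeasure X) :
    (μ : Measure X) (msupport μ)ᶜ = 0 := by
  set S : Set (Set X) := {U : Set X | IsOpen U ∧ (μ : Measure X) U = 0} with hS
  have hsub : (msupport μ)ᶜ ⊆ ⋃₀ S := by
    intro z hz
    simp only [msupport, mem_compl_iff, mem_setOf_eq, not_forall] at hz
    obtain ⟨U, hU, hzU, hμU⟩ := hz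
    exact ⟨U, ⟨hU, by simpa using hμU⟩, hzU⟩
  obtain ⟨T, hTc, hTS, hT⟩ := TopologicalSpace.isOpen_sUnion_countable S (fun U hU => hU.1)
  have h0 : (μ : Measure X) (⋃₀ S) = 0 := by
    rw [← hT]
    exact (measure_sUnion_null_iff hTc).2 fun U hU => (hTS hU).2
  exact measure_mono_null hsub h0

lemma dirac_mem_FF {K : Set X} {x : X} (hx : x ∈ K) :
    (⟨Measure.dirac x, Measure.dirac.isProbabilityMeasure⟩ : ProbabilityMeasure X) ∈ FF K := by
  intro z hz
  by_contra hzK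
  have hzx : z ≠ x := fun h => hzK (h ▸ hx)
  have hU : IsOpen ({x}ᶜ : Set X) := isClosed_singleton.isOpen_compl
  have := hz {x}ᶜ hU (by simpa using hzx)
  simp only [ProbabilityMeasure.coe_mk] at this
  rw [Measure.dirac_apply' x hU.measurableSet] at this
  simp at this

lemma mkDist_nonneg (μ ν : ProbabilityMeasure X) : 0 ≤ mkDist μ ν :=
  Real.iSup_nonneg fun _ => abs_nonneg _

lemma lip_integrable {f : X → ℝ} (hf : LipschitzWith 1 f) (μ : ProbabilityMeasure X) :
    Integrable f (μ : Measure X) :=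
  hf.continuous.integrable_of_hasCompactSupport (HasCompactSupport.of_compactSpace f)

lemma mkDist_bddAbove [Nonempty X] (μ ν : ProbabilityMeasure X) :
    BddAbove (Set.range fun f : {f : X → ℝ // LipschitzWith 1 f} =>
      |∫ x, f.1 x ∂(μ : Measure X) - ∫ x, f.1 x ∂(ν : Measure X)|) := by
  obtain ⟨x0⟩ := ‹Nonempty X›
  refine ⟨2 * Metric.diam (Set.univ : Set X), ?_⟩
  rintro r ⟨⟨f, hf⟩, rfl⟩
  have key : ∀ κ : ProbabilityMeasure X,
      |∫ x, f x ∂(κ : Measure X) - f x0| ≤ Metric.diam (Set.univ : Set X) := by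
    intro κ
    have h1 : ∫ x, f x ∂(κ : Measure X) - f x0 = ∫ x, (f x - f x0) ∂(κ : Measure X) := by
      rw [integral_sub (lip_integrable hf κ) (integrable_const _), integral_const]
      simp
    rw [h1, ← Real.norm_eq_abs]
    calc ‖∫ x, (f x - f x0) ∂(κ : Measure X)‖
        ≤ Metric.diam (Set.univ : Set X) * ((κ : Measure X) Set.univ).toReal := by
          refine norm_integral_le_of_norm_le_const (ae_of_all _ fun x => ?_)
          rw [Real.norm_eq_abs, ← Real.dist_eq]
          calc dist (f x) (f x0) ≤ 1 * dist x x0 := hf.dist_le_mul x x0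
            _ = dist x x0 := one_mul _
            _ ≤ Metric.diam (Set.univ : Set X) :=
              Metric.dist_le_diam_of_mem (isCompact_univ.isBounded) trivial trivial
      _ = Metric.diam (Set.univ : Set X) := by simp
  calc |∫ x, f x ∂(μ : Measure X) - ∫ x, f x ∂(ν : Measure X)|
      ≤ |∫ x, f x ∂(μ : Measure X) - f x0| + |f x0 - ∫ x, f x ∂(ν : Measure X)| := by
        have := abs_sub_abs_le_abs_sub (∫ x, f x ∂(μ : Measure X)) (∫ x, f x ∂(ν : Measure X))
        exact abs_sub_le _ _ _
    _ ≤ 2 * Metric.diam (Set.univ : Set X) := by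
        have h2 := key ν
        rw [abs_sub_comm] at h2
        linarith [key μ]

lemma mkDist_dirac (x y : X) :
    mkDist (⟨Measure.dirac x, Measure.dirac.isProbabilityMeasure⟩ : ProbabilityMeasure X)
      ⟨Measure.dirac y, Measure.dirac.isProbabilityMeasure⟩ = dist x y := by
  have hXne : Nonempty X := ⟨x⟩
  unfold mkDist
  haveI : Nonempty {f : X → ℝ // LipschitzWith 1 f} := ⟨⟨fun _ => (0:ℝ), LipschitzWith.const' 0⟩⟩
  apply le_antisymm
  · apply ciSup_le
    rintro ⟨f, hf⟩
    simp only [ProbabilityMeasure.coe_mk, integral_dirac]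
    rw [← Real.dist_eq]
    simpa using hf.dist_le_mul x y
  · have := le_ciSup (mkDist_bddAbove
      (⟨Measure.dirac x, Measure.dirac.isProbabilityMeasure⟩ : ProbabilityMeasure X)
      ⟨Measure.dirac y, Measure.dirac.isProbabilityMeasure⟩)
      (⟨fun z => dist z y, LipschitzWith.dist_left y⟩ : {f : X → ℝ // LipschitzWith 1 f})
    simpa [integral_dirac, abs_of_nonneg dist_nonneg] using this

end Aux

/-- Proposition 2.3: `I_d(K,K') = I_{ρ_d}(F_K, F_{K'})` for nonempty closed `K, K' ⊆ X`. -/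
theorem stmt10 {X : Type*} [MetricSpace X] [CompactSpace X] [MeasurableSpace X] [BorelSpace X]
    (K K' : Set X) (hK : IsClosed K) (hKne : K.Nonempty)
    (hK' : IsClosed K') (hK'ne : K'.Nonempty) :
    iDist dist K K' = iDist mkDist (FF K) (FF K') := by
  obtain ⟨x0, hx0⟩ := hKne
  obtain ⟨y0, hy0⟩ := hK'ne
  have hXne : Nonempty X := ⟨x0⟩
  set A : Set ℝ := {r : ℝ | ∃ a ∈ K, ∃ b ∈ K', r = dist a b} with hA
  set B : Set ℝ := {r : ℝ | ∃ a ∈ FF K, ∃ b ∈ FF K', r = mkDist a b} with hB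
  have hAne : A.Nonempty := ⟨dist x0 y0, x0, hx0, y0, hy0, rfl⟩
  have hBne : B.Nonempty := ⟨_, _, dirac_mem_FF hx0, _, dirac_mem_FF hy0, rfl⟩
  have hAbd : BddBelow A := ⟨0, by rintro r ⟨a, _, b, _, rfl⟩; exact dist_nonneg⟩
  have hBbd : BddBelow B := ⟨0, by rintro r ⟨a, _, b, _, rfl⟩; exact mkDist_nonneg a b⟩
  apply le_antisymm
  · -- iDist dist ≤ each mkDist μ ν
    apply le_csInf hBne
    rintro r ⟨μ, hμ, ν, hν, rfl⟩
    set I := sInf A with hI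
    set f : X → ℝ := fun z => Metric.infDist z K' with hf
    have hflip : LipschitzWith 1 f := Metric.lipschitz_infDist_pt K'
    -- ∫ f dν = 0
    have hν0 : ∫ x, f x ∂(ν : Measure X) = 0 := by
      have : f =ᵐ[(ν : Measure X)] 0 := by
        refine measure_mono_null ?_ (measure_compl_msupport ν)
        intro z hz
        simp only [mem_compl_iff]
        intro hzs
        have hzK' : z ∈ K' := hν hzs
        exact hz (by simp [f, Metric.infDist_zero_of_mem hzK'])
      rw [integral_congr_ae this]; simp
    -- ∫ f dμ ≥ I
    have hμI : I ≤ ∫ x, f x ∂(μ : Measure X) := by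
      have hae : (fun _ => I) ≤ᵐ[(μ : Measure X)] f := by
        rw [Filter.EventuallyLE, ae_iff]
        refine measure_mono_null ?_ (measure_compl_msupport μ)
        intro z hz
        simp only [mem_compl_iff]
        intro hzs
        apply hz
        haveI : Nonempty ↥K' := ⟨⟨y0, hy0⟩⟩
        rw [hf]
        simp only [Metric.infDist_eq_iInf]
        exact le_ciInf fun y => csInf_le hAbd ⟨z, hμ hzs, y, y.2, rfl⟩
      have := integral_mono_ae (integrable_const I) (lip_integrable hflip μ) hae
      simpa using this
    calc sInf A ≤ ∫ x, f x ∂(μ : Measure X) := hμI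
      _ = ∫ x, f x ∂(μ : Measure X) - ∫ x, f x ∂(ν : Measure X) := by rw [hν0, sub_zero]
      _ ≤ |∫ x, f x ∂(μ : Measure X) - ∫ x, f x ∂(ν : Measure X)| := le_abs_self _
      _ ≤ mkDist μ ν := le_ciSup (mkDist_bddAbove μ ν) ⟨f, hflip⟩
  · -- each dist x y is ≥ iDist mkDist
    apply le_csInf hAne
    rintro r ⟨x, hx, y, hy, rfl⟩
    have : dist x y ∈ B := ⟨_, dirac_mem_FF hx, _, dirac_mem_FF hy, (mkDist_dirac x y).symm⟩
    exact csInf_le hBbd this
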